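/- With $P_j^*(\mu) = \sum_k (\phi_k^j,\mu)\delta_{x_k^j}$ the dual hat-function projection on probability measures on $[0,M]^d$, one has $\|P_j^*\mu - \mu\|_{bLip^*} \le 2^d d \frac{M}{j}$ for every probability measure $\mu$, where $\|\eta\|_{bLip^*} = \sup\{|(f,\eta)| : \|f\|_\infty + \|f\|_{Lip} \le 1\}$. -/

import Mathlib

open MeasureTheory

/-- The bounded-Lipschitz dual norm distance `‖μ - η‖_{bLip*}`. -/
noncomputable def dBL (d : ℕ) (μ η : Measure (Fin d → ℝ)) : ℝ :=
  ⨆ f : {f : (Fin d → ℝ) → ℝ //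
      ∃ C L : ℝ, 0 ≤ C ∧ 0 ≤ L ∧ C + L ≤ 1 ∧ (∀ x, |f x| ≤ C) ∧
        ∀ x y, |f x - f y| ≤ L * ∑ i, |x i - y i|},
    |(∫ x, f.1 x ∂μ) - ∫ x, f.1 x ∂η|

/-- The dual hat-function projection `P_j^* μ = ∑_k (φ_k^j, μ) δ_{x_k^j}`. -/
noncomputable def dualProj (d j : ℕ) (M : ℝ)
    (φ : (Fin d → Fin (j + 1)) → (Fin d → ℝ) → ℝ)
    (μ : Measure (Fin d → ℝ)) : Measure (Fin d → ℝ) :=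
  ∑ k : Fin d → Fin (j + 1),
    ENNReal.ofReal (∫ x, φ k x ∂μ) • Measure.dirac (fun i => (k i : ℝ) * (M / j))

/-!
Pairing with a test function `f`, and using that the hats `φ_k^j` sum to one on `[0,M]^d`,
`(f, P_j^*μ - μ) = ∫ ∑_k φ_k^j (f(x_k^j) - f) dμ`. Since `φ_k^j` vanishes outside the
`ℓ^∞`-ball of radius `M/j` around `x_k^j`, each difference is at most `‖f‖_Lip · d M/j` where it
matters, and the nonnegative weights `φ_k^j` sum to one, so `|(f, P_j^*μ - μ)| ≤ d M/j`.
-/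

open Finset

noncomputable def hat (t : ℝ) : ℝ := max (1 - |t|) 0

theorem hat_nonneg (t : ℝ) : 0 ≤ hat t := le_max_right _ _

theorem hat_le_one (t : ℝ) : hat t ≤ 1 := max_le (by linarith [abs_nonneg t]) zero_le_one

theorem hat_eq_zero {t : ℝ} (ht : 1 ≤ |t|) : hat t = 0 := max_eq_right (by linarith)

@[fun_prop]
theorem continuous_hat : Continuous hat := by
  unfold hat; fun_prop

theorem hat_add_hat_sub_one {t : ℝ} (h0 : 0 ≤ t) (h1 : t ≤ 1) : hat t + hat (t - 1) = 1 := by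
  rw [hat, hat, abs_of_nonneg h0, abs_of_nonpos (by linarith), max_eq_left (by linarith),
    max_eq_left (by linarith)]
  ring

theorem sum_range_hat_sub_natCast {n : ℕ} (hn : 0 < n) {t : ℝ} (h0 : 0 ≤ t) (h1 : t ≤ n) :
    ∑ k ∈ range (n + 1), hat (t - k) = 1 := by
  induction n, hn using Nat.le_induction generalizing t with
  | base => simpa [sum_range_succ] using hat_add_hat_sub_one h0 (by simpa using h1)
  | succ n hn ih =>
    rcases le_or_gt t n with htn | hnt
    · rw [sum_range_succ, ih h0 htn, hat_eq_zero (by rw [abs_of_nonpos] <;> push_cast <;> linarith),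
        add_zero]
    · have h1' : (1 : ℝ) ≤ t := by linarith [(Nat.one_le_cast (α := ℝ)).2 hn]
      rw [sum_range_succ', Nat.cast_zero, sub_zero,
        hat_eq_zero (by rwa [abs_of_nonneg (by linarith)]), add_zero,
        ← ih (t := t - 1) (by linarith) (by push_cast at h1; linarith)]
      refine sum_congr rfl fun k _ => ?_
      push_cast; ring_nf

section HatBasis

variable {ι : Type*} [Fintype ι] (j : ℕ) (M : ℝ)

/-- `φ_k^j`, the tensor product of one-dimensional hats centred at `x_k^j = k * (M / j)`. -/
noncomputable def hatBasis (k : ι → Fin (j + 1)) (x : ι → ℝ) : ℝ :=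
  ∏ i, hat ((j / M) * (x i - (k i : ℝ) * (M / j)))

variable {j M}

theorem hatBasis_nonneg (k : ι → Fin (j + 1)) (x : ι → ℝ) : 0 ≤ hatBasis j M k x :=
  prod_nonneg fun _ _ => hat_nonneg _

theorem hatBasis_le_one (k : ι → Fin (j + 1)) (x : ι → ℝ) : hatBasis j M k x ≤ 1 :=
  prod_le_one (fun _ _ => hat_nonneg _) fun _ _ => hat_le_one _

@[fun_prop]
theorem continuous_hatBasis (k : ι → Fin (j + 1)) : Continuous (hatBasis j M k) := by
  unfold hatBasis; fun_prop

theorem integrable_hatBasis (μ : Measure (ι → ℝ)) [IsFiniteMeasure μ] (k : ι → Fin (j + 1)) :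
    Integrable (hatBasis j M k) μ :=
  .of_bound (continuous_hatBasis k).aestronglyMeasurable 1 <| ae_of_all _ fun x => by
    rw [Real.norm_eq_abs, abs_of_nonneg (hatBasis_nonneg k x)]
    exact hatBasis_le_one k x

theorem sum_hatBasis [DecidableEq ι] (hj : 0 < j) (hM : 0 < M) {x : ι → ℝ}
    (hx : ∀ i, x i ∈ Set.Icc 0 M) :
    ∑ k, hatBasis j M k x = 1 := by
  have hj' : (j : ℝ) ≠ 0 := by positivity
  have hline (i : ι) : ∑ a : Fin (j + 1), hat ((j / M) * (x i - (a : ℝ) * (M / j))) = 1 := by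
    have harg (a : Fin (j + 1)) : (j / M) * (x i - (a : ℝ) * (M / j)) = j / M * x i - a := by
      field_simp
    simp only [harg]
    rw [Fin.sum_univ_eq_sum_range (fun a => hat (j / M * x i - a))]
    refine sum_range_hat_sub_natCast hj (by have := (hx i).1; positivity) ?_
    rw [div_mul_eq_mul_div, div_le_iff₀ hM]
    exact mul_le_mul_of_nonneg_left (hx i).2 (Nat.cast_nonneg j)
  unfold hatBasis
  rw [← Fintype.prod_sum fun i (a : Fin (j + 1)) => hat ((j / M) * (x i - (a : ℝ) * (M / j)))]
  exact prod_eq_one fun i _ => hline i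

theorem abs_sub_le_of_hatBasis_ne_zero (hj : 0 < j) (hM : 0 < M) {k : ι → Fin (j + 1)}
    {x : ι → ℝ} (h : hatBasis j M k x ≠ 0) (i : ι) : |x i - (k i : ℝ) * (M / j)| ≤ M / j := by
  by_contra! hlt
  refine h (prod_eq_zero (mem_univ i) (hat_eq_zero ?_))
  rw [abs_mul, abs_of_pos (by positivity), ← div_le_iff₀' (by positivity), one_div_div]
  exact hlt.le

end HatBasis

section DualProjection

variable {X ι : Type*} [MeasurableSpace X] [Fintype ι]

theorem integral_sum_ofReal_smul_dirac [MeasurableSingletonClass X] {a : ι → ℝ}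
    (ha : ∀ k, 0 ≤ a k) (c : ι → X) (f : X → ℝ) :
    ∫ x, f x ∂(∑ k, ENNReal.ofReal (a k) • Measure.dirac (c k)) = ∑ k, a k * f (c k) := by
  rw [integral_finsetSum_measure fun k _ =>
    (integrable_dirac enorm_lt_top).smul_measure ENNReal.ofReal_ne_top]
  refine sum_congr rfl fun k _ => ?_
  rw [integral_smul_measure, integral_dirac, ENNReal.toReal_ofReal (ha k), smul_eq_mul]

/-- Via the duality `(f, P^*μ - μ) = (Pf - f, μ)`, where `Pf = ∑_k f(c_k) φ_k`. -/
theorem abs_integral_sum_smul_dirac_sub_integral_le [MeasurableSingletonClass X]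
    (μ : Measure X) [IsProbabilityMeasure μ] {φ : ι → X → ℝ} (hφ_int : ∀ k, Integrable (φ k) μ)
    (hφ_nonneg : ∀ k x, 0 ≤ φ k x) (hφ_sum : ∀ᵐ x ∂μ, ∑ k, φ k x = 1)
    {f : X → ℝ} (hf : Integrable f μ) (c : ι → X) {ε : ℝ}
    (hfc : ∀ k x, φ k x ≠ 0 → |f (c k) - f x| ≤ ε) :
    |∫ x, f x ∂(∑ k, ENNReal.ofReal (∫ x, φ k x ∂μ) • Measure.dirac (c k)) - ∫ x, f x ∂μ|
      ≤ ε := by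
  have hdual : ∫ x, f x ∂(∑ k, ENNReal.ofReal (∫ x, φ k x ∂μ) • Measure.dirac (c k))
      - ∫ x, f x ∂μ = ∫ x, ∑ k, φ k x * (f (c k) - f x) ∂μ := by
    rw [integral_sum_ofReal_smul_dirac (fun k => integral_nonneg (hφ_nonneg k))]
    simp only [← integral_mul_const]
    rw [← integral_finsetSum _ fun k _ => (hφ_int k).mul_const _, ← integral_sub
      (integrable_finsetSum _ fun k _ => (hφ_int k).mul_const _) hf]
    refine integral_congr_ae (hφ_sum.mono fun x hx => ?_)
    simp only [mul_sub, sum_sub_distrib, ← sum_mul, hx, one_mul]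
  have hbound : ∀ᵐ x ∂μ, ‖∑ k, φ k x * (f (c k) - f x)‖ ≤ ε := by
    filter_upwards [hφ_sum] with x hx
    calc ‖∑ k, φ k x * (f (c k) - f x)‖ ≤ ∑ k, φ k x * |f (c k) - f x| := by
          simpa only [Real.norm_eq_abs, abs_mul, abs_of_nonneg (hφ_nonneg _ x)]
            using abs_sum_le_sum_abs (fun k => φ k x * (f (c k) - f x)) univ
      _ ≤ ∑ k, φ k x * ε := by
          refine sum_le_sum fun k _ => ?_
          rcases eq_or_ne (φ k x) 0 with h | h
          · simp [h]
          · exact mul_le_mul_of_nonneg_left (hfc k x h) (hφ_nonneg k x)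
      _ = ε := by rw [← sum_mul, hx, one_mul]
  simpa [hdual] using norm_integral_le_of_norm_le_const hbound

end DualProjection

theorem continuous_of_abs_sub_le_mul_sum_abs {ι : Type*} [Fintype ι] {f : (ι → ℝ) → ℝ} {L : ℝ}
    (hL : 0 ≤ L) (hf : ∀ x y, |f x - f y| ≤ L * ∑ i, |x i - y i|) : Continuous f := by
  refine (LipschitzWith.of_dist_le_mul (K := (L * Fintype.card ι).toNNReal)
    fun x y => ?_).continuous
  rw [Real.coe_toNNReal _ (by positivity), Real.dist_eq, mul_assoc]
  refine (hf x y).trans (mul_le_mul_of_nonneg_left ?_ hL)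
  simpa only [← Real.dist_eq, sum_const, card_univ, nsmul_eq_mul]
    using sum_le_sum fun i (_ : i ∈ univ) => dist_le_pi_dist x y i

theorem dBL_le {d : ℕ} {μ η : Measure (Fin d → ℝ)} {ε : ℝ}
    (h : ∀ (f : (Fin d → ℝ) → ℝ) (C L : ℝ), 0 ≤ C → 0 ≤ L → C + L ≤ 1 → (∀ x, |f x| ≤ C) →
      (∀ x y, |f x - f y| ≤ L * ∑ i, |x i - y i|) → |∫ x, f x ∂μ - ∫ x, f x ∂η| ≤ ε) :
    dBL d μ η ≤ ε := by
  have : Nonempty {f : (Fin d → ℝ) → ℝ // ∃ C L : ℝ, 0 ≤ C ∧ 0 ≤ L ∧ C + L ≤ 1 ∧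
      (∀ x, |f x| ≤ C) ∧ ∀ x y, |f x - f y| ≤ L * ∑ i, |x i - y i|} :=
    ⟨0, 0, 0, le_rfl, le_rfl, by norm_num, by simp, by simp⟩
  exact ciSup_le fun ⟨f, C, L, hC, hL, hCL, hfC, hfL⟩ => h f C L hC hL hCL hfC hfL

theorem stmt13_general
    (d j : ℕ) (hj : 0 < j) (M : ℝ) (hM : 0 < M)
    (χ : ℝ → ℝ) (hχ : ∀ t, χ t = max (1 - |t|) 0)
    (φ : (Fin d → Fin (j + 1)) → (Fin d → ℝ) → ℝ)
    (hφ : ∀ k x, φ k x = ∏ i, χ ((j / M) * (x i - (k i : ℝ) * (M / j))))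
    (μ : Measure (Fin d → ℝ)) [IsProbabilityMeasure μ]
    (hμ : μ {x | ¬ ∀ i, x i ∈ Set.Icc (0:ℝ) M} = 0) :
    dBL d (dualProj d j M φ μ) μ ≤ 2 ^ d * d * (M / j) := by
  obtain rfl : φ = hatBasis j M := by
    ext k x
    simp only [hφ, hχ, hatBasis, hat]
  have hsum : ∀ᵐ x ∂μ, ∑ k, hatBasis j M k x = 1 :=
    (ae_iff.2 hμ).mono fun x hx => sum_hatBasis hj hM hx
  refine dBL_le fun f C L hC hL hCL hfC hfL => ?_
  have hf : Integrable f μ :=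
    .of_bound (continuous_of_abs_sub_le_mul_sum_abs hL hfL).aestronglyMeasurable C (ae_of_all _ hfC)
  have hosc (k) (x) (hk : hatBasis j M k x ≠ 0) :
      |f (fun i => (k i : ℝ) * (M / j)) - f x| ≤ L * (d * (M / j)) := by
    refine (hfL _ _).trans (mul_le_mul_of_nonneg_left ?_ hL)
    simpa [abs_sub_comm] using
      sum_le_sum fun i (_ : i ∈ univ) => abs_sub_le_of_hatBasis_ne_zero hj hM hk i
  calc _ ≤ L * (d * (M / j)) :=
        abs_integral_sum_smul_dirac_sub_integral_le μ (integrable_hatBasis μ) hatBasis_nonneg hsum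
          hf _ hosc
    _ ≤ 1 * (d * (M / j)) := by gcongr; linarith
    _ ≤ 2 ^ d * d * (M / j) := by
        rw [mul_assoc]; gcongr; exact one_le_pow₀ one_le_two

/-- `‖P_j^* μ - μ‖_{bLip*} ≤ 2^d d (M/j)` for every probability measure `μ` on
`[0,M]^d`. -/
theorem stmt13
    (d j : ℕ) (hd : 0 < d) (hj : 0 < j) (M : ℝ) (hM : 0 < M)
    (χ : ℝ → ℝ) (hχ : ∀ t, χ t = max (1 - |t|) 0)
    (φ : (Fin d → Fin (j + 1)) → (Fin d → ℝ) → ℝ)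
    (hφ : ∀ k x, φ k x = ∏ i, χ ((j / M) * (x i - (k i : ℝ) * (M / j))))
    (μ : Measure (Fin d → ℝ)) [IsProbabilityMeasure μ]
    (hμ : μ {x | ¬ ∀ i, x i ∈ Set.Icc (0:ℝ) M} = 0) :
    dBL d (dualProj d j M φ μ) μ ≤ 2 ^ d * d * (M / j) :=
  stmt13_general d j hj M hM χ hχ φ hφ μ hμ
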